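/- Let α ∈ (1,2], γ > 0 and x > 0. Then (contour rotation identity obtained from Cauchy's theorem applied to z ↦ z^γ exp(−izx − z^α) on a circular sector of opening angle π/(2α)): ∫₀^∞ ξ^γ exp(−iξx − ξ^α) dξ = e^{−i(γ+1)π/(2α)} ∫₀^∞ λ^γ exp(−λx·e^{i(α−1)π/(2α)} − λ^α·e^{−iπ/2}) dλ, where both improper complex integrals converge absolutely (note cos((α−1)π/(2α)) > 0 for α ∈ (1,2]). -/

import Mathlib

/-!
Put `f z = z^γ exp(-izx - z^α)` and `F θ = e^{iθ} ∫₀^∞ f(l e^{iθ}) dl` for `-π/(2α) ≤ θ ≤ 0`.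
Because `f` is holomorphic off the negative real axis, `∂_θ (e^{iθ} f(l e^{iθ}))` equals
`∂_l (i l e^{iθ} f(l e^{iθ}))`, so `F' θ` is a boundary term, which vanishes since `l f(l e^{iθ})`
tends to `0` at both ends. Differentiation under the integral sign is justified by the bound
`|f(l e^{iθ})| = l^γ exp(l x sin θ - l^α cos αθ) ≤ l^γ (e^{-cl} + e^{-c l^α})`, uniform on the
sector. Hence `F 0 = F (-π/(2α))`, and `α · π/(2α) = π/2` turns the latter into the right side.
-/

open MeasureTheory Set Filter Topology Complex
open scoped Real

noncomputable section

def rayIntegrand (f : ℂ → ℂ) (θ l : ℝ) : ℂ := exp (θ * I) * f (l * exp (θ * I))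

def rayIntegrandDeriv (f : ℂ → ℂ) (θ l : ℝ) : ℂ :=
  I * exp (θ * I) * (f (l * exp (θ * I)) + l * exp (θ * I) * deriv f (l * exp (θ * I)))

@[simp]
theorem rayIntegrand_zero (f : ℂ → ℂ) (l : ℝ) : rayIntegrand f 0 l = f l := by
  simp [rayIntegrand]

section RayRotation

variable {f : ℂ → ℂ} {θ l : ℝ}

theorem hasDerivAt_rayIntegrand_angle (hf : DifferentiableAt ℂ f (l * exp (θ * I))) :
    HasDerivAt (fun φ => rayIntegrand f φ l) (rayIntegrandDeriv f θ l) θ := by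
  have he : HasDerivAt (fun φ : ℝ => exp (φ * I)) (exp (θ * I) * I) θ :=
    ((hasDerivAt_id θ).ofReal_comp.mul_const I).cexp.congr_deriv (by simp)
  have hw : HasDerivAt (fun φ : ℝ => f (l * exp (φ * I)))
      (deriv f (l * exp (θ * I)) * (l * (exp (θ * I) * I))) θ :=
    hf.hasDerivAt.comp θ (he.const_mul (l : ℂ))
  exact (he.mul hw).congr_deriv (by rw [rayIntegrandDeriv]; ring)

/-- Together with `hasDerivAt_rayIntegrand_angle` this is the Cauchy–Riemann equation in polar
coordinates: the angular derivative of the ray integrand is the radial derivative of `i l` times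
it, so the angular derivative of the ray integral is a boundary term. -/
theorem hasDerivAt_rayIntegrand_radius (hf : DifferentiableAt ℂ f (l * exp (θ * I))) :
    HasDerivAt (fun r : ℝ => I * r * rayIntegrand f θ r) (rayIntegrandDeriv f θ l) l := by
  have hr : HasDerivAt (fun r : ℝ => (r : ℂ) * exp (θ * I)) (exp (θ * I)) l :=
    ((hasDerivAt_id l).ofReal_comp.mul_const _).congr_deriv (by simp)
  have hw : HasDerivAt (fun r : ℝ => f (r * exp (θ * I)))
      (deriv f (l * exp (θ * I)) * exp (θ * I)) l :=
    hf.hasDerivAt.comp l hr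
  refine (((hr.mul hw).const_mul I).congr_deriv (by rw [rayIntegrandDeriv]; ring))
    |>.congr_of_eventuallyEq (Eventually.of_forall fun r => ?_)
  simp only [rayIntegrand, Pi.mul_apply]
  ring

theorem continuous_ofReal_mul_const (w : ℂ) : Continuous fun r : ℝ => (r : ℂ) * w :=
  continuous_ofReal.mul continuous_const

theorem continuousOn_comp_ray
    (hf : ∀ l ∈ Ioi (0 : ℝ), DifferentiableAt ℂ f (l * exp (θ * I))) :
    ContinuousOn (fun l : ℝ => f (l * exp (θ * I))) (Ioi 0) := fun l hl =>
  ((hf l hl).continuousAt.comp (f := fun r : ℝ => (r : ℂ) * exp (θ * I))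
    (continuous_ofReal_mul_const _).continuousAt).continuousWithinAt

theorem continuousOn_rayIntegrand
    (hf : ∀ l ∈ Ioi (0 : ℝ), DifferentiableAt ℂ f (l * exp (θ * I))) :
    ContinuousOn (rayIntegrand f θ) (Ioi 0) :=
  continuousOn_const.mul (continuousOn_comp_ray hf)

theorem aestronglyMeasurable_rayIntegrandDeriv
    (hf : ∀ l ∈ Ioi (0 : ℝ), DifferentiableAt ℂ f (l * exp (θ * I))) :
    AEStronglyMeasurable (rayIntegrandDeriv f θ) (volume.restrict (Ioi 0)) := by
  have hdf : Measurable (fun l : ℝ => deriv f (l * exp (θ * I))) :=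
    (measurable_deriv f).comp (by fun_prop)
  exact aestronglyMeasurable_const.mul
    (((continuousOn_comp_ray hf).aestronglyMeasurable measurableSet_Ioi).add
      ((continuous_ofReal_mul_const _).aestronglyMeasurable.mul hdf.aestronglyMeasurable))

theorem norm_rayIntegrandDeriv_le (hl : 0 ≤ l) :
    ‖rayIntegrandDeriv f θ l‖ ≤ ‖f (l * exp (θ * I))‖ + l * ‖deriv f (l * exp (θ * I))‖ := by
  rw [rayIntegrandDeriv, norm_mul, norm_mul, norm_I, norm_exp_ofReal_mul_I, one_mul, one_mul]
  refine (norm_add_le _ _).trans_eq ?_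
  rw [norm_mul, norm_mul, norm_exp_ofReal_mul_I, mul_one, norm_real, Real.norm_of_nonneg hl]

theorem integral_rayIntegrandDeriv_eq_zero
    (hf : ∀ l ∈ Ioi (0 : ℝ), DifferentiableAt ℂ f (l * exp (θ * I))) (hf0 : ContinuousAt f 0)
    (hint : IntegrableOn (rayIntegrandDeriv f θ) (Ioi 0))
    (hdecay : Tendsto (fun l : ℝ => (l : ℂ) * f (l * exp (θ * I))) atTop (𝓝 0)) :
    ∫ l in Ioi 0, rayIntegrandDeriv f θ l = 0 := by
  have hcont : ContinuousAt (fun r : ℝ => I * r * rayIntegrand f θ r) 0 := by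
    have : ContinuousAt (fun r : ℝ => f (r * exp (θ * I))) 0 :=
      hf0.comp_of_eq (continuous_ofReal_mul_const _).continuousAt (by simp)
    exact (continuousAt_const.mul continuous_ofReal.continuousAt).mul
      (continuousAt_const.mul this)
  have htends : Tendsto (fun r : ℝ => I * r * rayIntegrand f θ r) atTop (𝓝 0) := by
    have := hdecay.const_mul (I * exp (θ * I))
    rw [mul_zero] at this
    refine this.congr fun r => ?_
    simp only [rayIntegrand]
    ring
  simpa using integral_Ioi_of_hasDerivAt_of_tendsto hcont.continuousWithinAt
    (fun l hl => hasDerivAt_rayIntegrand_radius (hf l hl)) hint htends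

theorem integrableOn_rayIntegrand {B : ℝ → ℝ}
    (hf : ∀ l ∈ Ioi (0 : ℝ), DifferentiableAt ℂ f (l * exp (θ * I)))
    (hB : IntegrableOn B (Ioi 0)) (hfB : ∀ l ∈ Ioi (0 : ℝ), ‖f (l * exp (θ * I))‖ ≤ B l) :
    IntegrableOn (rayIntegrand f θ) (Ioi 0) := by
  refine hB.mono' ((continuousOn_rayIntegrand hf).aestronglyMeasurable measurableSet_Ioi)
    (ae_restrict_of_forall_mem measurableSet_Ioi fun l hl => ?_)
  rw [rayIntegrand, norm_mul, norm_exp_ofReal_mul_I, one_mul]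
  exact hfB l hl

variable {a b : ℝ} {B B' : ℝ → ℝ}

theorem hasDerivAt_integral_rayIntegrand (hθ : θ ∈ Ioo a b)
    (hf : ∀ φ ∈ Icc a b, ∀ l ∈ Ioi (0 : ℝ), DifferentiableAt ℂ f (l * exp (φ * I)))
    (hf0 : ContinuousAt f 0)
    (hB : IntegrableOn B (Ioi 0))
    (hfB : ∀ φ ∈ Icc a b, ∀ l ∈ Ioi (0 : ℝ), ‖f (l * exp (φ * I))‖ ≤ B l)
    (hB' : IntegrableOn B' (Ioi 0))
    (hf'B : ∀ φ ∈ Icc a b, ∀ l ∈ Ioi (0 : ℝ), l * ‖deriv f (l * exp (φ * I))‖ ≤ B' l)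
    (hdecay : Tendsto (fun l : ℝ => (l : ℂ) * f (l * exp (θ * I))) atTop (𝓝 0)) :
    HasDerivAt (fun φ => ∫ l in Ioi 0, rayIntegrand f φ l) 0 θ := by
  have hsub : Ioo a b ⊆ Icc a b := Ioo_subset_Icc_self
  obtain ⟨hint, hderiv⟩ := hasDerivAt_integral_of_dominated_loc_of_deriv_le
    (Ioo_mem_nhds hθ.1 hθ.2)
    (eventually_of_mem (Ioo_mem_nhds hθ.1 hθ.2) fun φ hφ =>
      (continuousOn_rayIntegrand (hf φ (hsub hφ))).aestronglyMeasurable measurableSet_Ioi)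
    (integrableOn_rayIntegrand (hf θ (hsub hθ)) hB (hfB θ (hsub hθ)))
    (aestronglyMeasurable_rayIntegrandDeriv (hf θ (hsub hθ)))
    (ae_restrict_of_forall_mem measurableSet_Ioi fun l hl φ hφ =>
      (norm_rayIntegrandDeriv_le (le_of_lt hl)).trans
        (add_le_add (hfB φ (hsub hφ) l hl) (hf'B φ (hsub hφ) l hl)))
    (hB.add hB')
    (ae_restrict_of_forall_mem measurableSet_Ioi fun l hl φ hφ =>
      hasDerivAt_rayIntegrand_angle (hf φ (hsub hφ) l hl))
  rwa [integral_rayIntegrandDeriv_eq_zero (hf θ (hsub hθ)) hf0 hint hdecay] at hderiv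

theorem continuousOn_integral_rayIntegrand
    (hf : ∀ φ ∈ Icc a b, ∀ l ∈ Ioi (0 : ℝ), DifferentiableAt ℂ f (l * exp (φ * I)))
    (hB : IntegrableOn B (Ioi 0))
    (hfB : ∀ φ ∈ Icc a b, ∀ l ∈ Ioi (0 : ℝ), ‖f (l * exp (φ * I))‖ ≤ B l) :
    ContinuousOn (fun φ => ∫ l in Ioi 0, rayIntegrand f φ l) (Icc a b) := by
  refine continuousOn_of_dominated
    (fun φ hφ => (continuousOn_rayIntegrand (hf φ hφ)).aestronglyMeasurable measurableSet_Ioi)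
    (fun φ hφ => ae_restrict_of_forall_mem measurableSet_Ioi fun l hl => ?_) hB
    (ae_restrict_of_forall_mem measurableSet_Ioi fun l hl φ hφ =>
      (hasDerivAt_rayIntegrand_angle (hf φ hφ l hl)).continuousAt.continuousWithinAt)
  rw [rayIntegrand, norm_mul, norm_exp_ofReal_mul_I, one_mul]
  exact hfB φ hφ l hl

/-- Cauchy's theorem for the sector between the rays of angles `a` and `b`. -/
theorem integral_rayIntegrand_eq (hab : a ≤ b)
    (hf : ∀ φ ∈ Icc a b, ∀ l ∈ Ioi (0 : ℝ), DifferentiableAt ℂ f (l * exp (φ * I)))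
    (hf0 : ContinuousAt f 0)
    (hB : IntegrableOn B (Ioi 0))
    (hfB : ∀ φ ∈ Icc a b, ∀ l ∈ Ioi (0 : ℝ), ‖f (l * exp (φ * I))‖ ≤ B l)
    (hB' : IntegrableOn B' (Ioi 0))
    (hf'B : ∀ φ ∈ Icc a b, ∀ l ∈ Ioi (0 : ℝ), l * ‖deriv f (l * exp (φ * I))‖ ≤ B' l)
    (hdecay : ∀ φ ∈ Ioo a b,
      Tendsto (fun l : ℝ => (l : ℂ) * f (l * exp (φ * I))) atTop (𝓝 0)) :
    ∫ l in Ioi 0, rayIntegrand f a l = ∫ l in Ioi 0, rayIntegrand f b l := by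
  have h := intervalIntegral.integral_eq_sub_of_hasDerivAt_of_le hab
    (continuousOn_integral_rayIntegrand hf hB hfB)
    (fun φ hφ => hasDerivAt_integral_rayIntegrand hφ hf hf0 hB hfB hB' hf'B (hdecay φ hφ))
    intervalIntegrable_const
  rw [intervalIntegral.integral_zero, eq_comm, sub_eq_zero] at h
  exact h.symm

end RayRotation

section PolarForm

variable {l θ : ℝ}

theorem arg_ofReal_mul_exp_mul_I (hl : 0 < l) (hθ : θ ∈ Ioc (-π) π) :
    arg (l * exp (θ * I)) = θ := by
  rw [arg_real_mul _ hl, exp_mul_I, arg_cos_add_sin_mul_I hθ]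

theorem ofReal_mul_exp_mul_I_mem_slitPlane (hl : 0 < l) (hθ : θ ∈ Ioo (-π) π) :
    (l * exp (θ * I) : ℂ) ∈ slitPlane := by
  rw [mem_slitPlane_iff_arg, arg_ofReal_mul_exp_mul_I hl (Ioo_subset_Ioc_self hθ)]
  exact ⟨hθ.2.ne, mul_ne_zero (ofReal_ne_zero.2 hl.ne') (exp_ne_zero _)⟩

theorem ofReal_mul_exp_mul_I_cpow (hl : 0 < l) (hθ : θ ∈ Ioc (-π) π) (s : ℂ) :
    (l * exp (θ * I) : ℂ) ^ s = (l : ℂ) ^ s * exp (θ * s * I) := by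
  have hl' : (l : ℂ) ≠ 0 := ofReal_ne_zero.2 hl.ne'
  rw [cpow_def_of_ne_zero (mul_ne_zero hl' (exp_ne_zero _)), cpow_def_of_ne_zero hl',
    log_ofReal_mul hl (exp_ne_zero _), log_exp (by simpa using hθ.1) (by simpa using hθ.2),
    ofReal_log hl.le, ← exp_add]
  ring_nf

end PolarForm

def stableFourierIntegrand (α γ x : ℝ) (z : ℂ) : ℂ :=
  z ^ (γ : ℂ) * exp (-(I * z * x) - z ^ (α : ℂ))

section StableFourierIntegrand

variable {α γ x l θ : ℝ} {z : ℂ}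

theorem norm_stableFourierIntegrand_ray (hl : 0 < l) (hθ : θ ∈ Ioc (-π) π) :
    ‖stableFourierIntegrand α γ x (l * exp (θ * I))‖
      = l ^ γ * Real.exp (l * x * Real.sin θ - l ^ α * Real.cos (α * θ)) := by
  rw [stableFourierIntegrand, ofReal_mul_exp_mul_I_cpow hl hθ, ofReal_mul_exp_mul_I_cpow hl hθ,
    ← ofReal_cpow hl.le, ← ofReal_cpow hl.le, ← ofReal_mul, ← ofReal_mul, norm_mul, norm_mul,
    norm_exp_ofReal_mul_I, norm_real, Real.norm_of_nonneg (Real.rpow_nonneg hl.le _), mul_one,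
    norm_exp, mul_comm θ α]
  simp only [sub_re, neg_re, mul_re, mul_im, I_re, I_im, ofReal_re, ofReal_im,
    exp_ofReal_mul_I_re, exp_ofReal_mul_I_im]
  ring_nf

theorem hasDerivAt_stableFourierIntegrand (hz : z ∈ slitPlane) :
    HasDerivAt (stableFourierIntegrand α γ x)
      (γ * z ^ (γ - 1 : ℂ) * exp (-(I * z * x) - z ^ (α : ℂ))
        + z ^ (γ : ℂ) * (exp (-(I * z * x) - z ^ (α : ℂ)) * (-(I * x) - α * z ^ (α - 1 : ℂ))))
      z := by
  have hE : HasDerivAt (fun w => -(I * w * x) - w ^ (α : ℂ))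
      (-(I * x) - α * z ^ (α - 1 : ℂ)) z :=
    (((hasDerivAt_id z).const_mul I).mul_const (x : ℂ)).neg.sub
      (hasStrictDerivAt_cpow_const hz).hasDerivAt |>.congr_deriv (by ring)
  exact (hasStrictDerivAt_cpow_const hz).hasDerivAt.mul hE.cexp

theorem mul_deriv_stableFourierIntegrand (hz : z ∈ slitPlane) :
    z * deriv (stableFourierIntegrand α γ x) z
      = stableFourierIntegrand α γ x z * (γ - I * x * z - α * z ^ (α : ℂ)) := by
  have hz0 : z ≠ 0 := slitPlane_ne_zero hz
  rw [(hasDerivAt_stableFourierIntegrand hz).deriv, stableFourierIntegrand,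
    cpow_sub _ _ hz0, cpow_sub _ _ hz0, cpow_one]
  field_simp
  ring

theorem continuousAt_stableFourierIntegrand_zero (hα : 0 < α) (hγ : 0 < γ) :
    ContinuousAt (stableFourierIntegrand α γ x) 0 := by
  have hpow : ∀ {s : ℝ}, 0 < s → ContinuousAt (fun w : ℂ => w ^ (s : ℂ)) 0 := fun hs =>
    continuousAt_cpow_const_of_re_pos (by simp) (by simpa using hs)
  exact (hpow hγ).mul (((continuousAt_const.mul continuousAt_id).mul continuousAt_const).neg.sub
    (hpow hα)).cexp

end StableFourierIntegrand

section SectorEstimates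

variable {α c x l θ : ℝ}

theorem cos_mul_nonneg_of_mem_Icc (hα : 0 < α) (hθ : θ ∈ Icc (-(π / (2 * α))) 0) :
    0 ≤ Real.cos (α * θ) := by
  have hαθ : -(π / 2) ≤ α * θ := by
    have hαb : α * (π / (2 * α)) = π / 2 := by field_simp
    have := mul_le_mul_of_nonneg_left hθ.1 hα.le
    rwa [mul_neg, hαb] at this
  exact Real.cos_nonneg_of_mem_Icc ⟨hαθ, by nlinarith [hθ.2, Real.pi_pos]⟩

theorem exp_le_of_mem_sector (hα : 1 ≤ α) (hx : 0 ≤ x) (hl : 0 ≤ l)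
    (hθ : θ ∈ Icc (-(π / (2 * α))) 0) (hc₁ : c ≤ x * Real.sin (π / (4 * α)))
    (hc₂ : c ≤ Real.cos (π / 4)) :
    Real.exp (l * x * Real.sin θ - l ^ α * Real.cos (α * θ))
      ≤ Real.exp (-c * l) + Real.exp (-c * l ^ α) := by
  have hα0 : 0 < α := by linarith
  have hlα : 0 ≤ l ^ α := Real.rpow_nonneg hl α
  have hcos := cos_mul_nonneg_of_mem_Icc hα0 hθ
  have hb : π / (2 * α) ≤ π / 2 :=
    div_le_div_of_nonneg_left Real.pi_pos.le two_pos (by linarith)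
  have hαb : α * (π / (4 * α)) = π / 4 := by field_simp
  -- Away from the real axis `sin θ` is bounded away from `0`, which gives decay in `l`;
  -- near it `cos (α θ) ≥ cos (π / 4)`, which gives decay in `l ^ α`.
  rcases le_or_gt θ (-(π / (4 * α))) with hθ' | hθ'
  · have hsin : Real.sin θ ≤ -Real.sin (π / (4 * α)) := by
      rw [← Real.sin_neg]
      have : 0 < π / (4 * α) := by positivity
      exact Real.sin_le_sin_of_le_of_le_pi_div_two (by linarith [hθ.1])
        (by linarith [Real.pi_pos]) hθ'
    refine (Real.exp_le_exp.2 ?_).trans (le_add_of_nonneg_right (Real.exp_nonneg _))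
    nlinarith [mul_le_mul_of_nonneg_left hsin (mul_nonneg hl hx), mul_nonneg hlα hcos,
      mul_le_mul_of_nonneg_left hc₁ hl]
  · have hsin : Real.sin θ ≤ 0 :=
      Real.sin_nonpos_of_nonpos_of_neg_pi_le hθ.2 (by linarith [hθ.1, Real.pi_pos])
    have hcos' : Real.cos (π / 4) ≤ Real.cos (α * θ) := by
      have hαθ : -(π / 4) < α * θ := by
        have := mul_lt_mul_of_pos_left hθ' hα0
        rwa [mul_neg, hαb] at this
      rw [← Real.cos_neg (α * θ)]
      exact Real.cos_le_cos_of_nonneg_of_le_pi (by nlinarith [hθ.2]) (by linarith [Real.pi_pos])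
        (by linarith)
    refine (Real.exp_le_exp.2 ?_).trans (le_add_of_nonneg_left (Real.exp_nonneg _))
    nlinarith [mul_nonpos_of_nonneg_of_nonpos (mul_nonneg hl hx) hsin,
      mul_le_mul_of_nonneg_left (hc₂.trans hcos') hlα]

end SectorEstimates

def sectorMajorant (c α s l : ℝ) : ℝ := l ^ s * (Real.exp (-c * l) + Real.exp (-c * l ^ α))

section Majorants

variable {α γ c s x l θ : ℝ}

theorem integrableOn_sectorMajorant (hs : -1 < s) (hc : 0 < c) (hα : 0 < α) :
    IntegrableOn (sectorMajorant c α s) (Ioi 0) := by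
  have h₁ := integrableOn_rpow_mul_exp_neg_mul_rpow hs one_pos hc
  simp only [Real.rpow_one] at h₁
  refine (h₁.add (integrableOn_rpow_mul_exp_neg_mul_rpow hs hα hc)).congr_fun
    (fun l _ => ?_) measurableSet_Ioi
  simp only [sectorMajorant, Pi.add_apply]
  ring

theorem mem_Ioo_of_mem_sector (hα : 1 / 2 < α) (hθ : θ ∈ Icc (-(π / (2 * α))) 0) :
    θ ∈ Ioo (-π) π := by
  have : π / (2 * α) < π := by
    rw [div_lt_iff₀ (by linarith)]; nlinarith [Real.pi_pos]
  exact ⟨by linarith [hθ.1], by linarith [hθ.2, Real.pi_pos]⟩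

theorem norm_stableFourierIntegrand_le (hα : 1 ≤ α) (hx : 0 ≤ x)
    (hc₁ : c ≤ x * Real.sin (π / (4 * α))) (hc₂ : c ≤ Real.cos (π / 4))
    (hθ : θ ∈ Icc (-(π / (2 * α))) 0) (hl : 0 < l) :
    ‖stableFourierIntegrand α γ x (l * exp (θ * I))‖ ≤ sectorMajorant c α γ l := by
  rw [norm_stableFourierIntegrand_ray hl
    (Ioo_subset_Ioc_self (mem_Ioo_of_mem_sector (by linarith) hθ))]
  exact mul_le_mul_of_nonneg_left (exp_le_of_mem_sector hα hx hl.le hθ hc₁ hc₂)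
    (Real.rpow_nonneg hl.le _)

theorem mul_norm_deriv_stableFourierIntegrand_le (hα : 1 ≤ α) (hγ : 0 ≤ γ) (hx : 0 ≤ x)
    (hc₁ : c ≤ x * Real.sin (π / (4 * α))) (hc₂ : c ≤ Real.cos (π / 4))
    (hθ : θ ∈ Icc (-(π / (2 * α))) 0) (hl : 0 < l) :
    l * ‖deriv (stableFourierIntegrand α γ x) (l * exp (θ * I))‖
      ≤ γ * sectorMajorant c α γ l + x * sectorMajorant c α (γ + 1) l
        + α * sectorMajorant c α (γ + α) l := by
  set w : ℂ := l * exp (θ * I)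
  have hw : ‖w‖ = l := by
    rw [norm_mul, norm_exp_ofReal_mul_I, mul_one, norm_real, Real.norm_of_nonneg hl.le]
  have hfactor : ‖(γ : ℂ) - I * x * w - α * w ^ (α : ℂ)‖ ≤ γ + x * l + α * l ^ α := by
    refine (norm_sub_le _ _).trans (add_le_add ((norm_sub_le _ _).trans (add_le_add ?_ ?_)) ?_)
      <;> simp [norm_cpow_real, hw, abs_of_nonneg hγ, abs_of_nonneg hx,
        abs_of_nonneg (by linarith : (0 : ℝ) ≤ α)]
  have hM : sectorMajorant c α γ l * (γ + x * l + α * l ^ α)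
      = γ * sectorMajorant c α γ l + x * sectorMajorant c α (γ + 1) l
        + α * sectorMajorant c α (γ + α) l := by
    simp only [sectorMajorant, Real.rpow_add hl, Real.rpow_one]
    ring
  calc l * ‖deriv (stableFourierIntegrand α γ x) w‖
      = ‖stableFourierIntegrand α γ x w‖ * ‖(γ : ℂ) - I * x * w - α * w ^ (α : ℂ)‖ := by
        rw [← hw, ← norm_mul, mul_deriv_stableFourierIntegrand
          (ofReal_mul_exp_mul_I_mem_slitPlane hl (mem_Ioo_of_mem_sector (by linarith) hθ)),
          norm_mul]
    _ ≤ sectorMajorant c α γ l * (γ + x * l + α * l ^ α) :=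
        mul_le_mul (norm_stableFourierIntegrand_le hα hx hc₁ hc₂ hθ hl) hfactor (norm_nonneg _)
          (by simp only [sectorMajorant]; positivity)
    _ = _ := hM

end Majorants

section Rotation

variable {α γ x l θ : ℝ}

theorem tendsto_ofReal_mul_stableFourierIntegrand_ray (hα : 1 / 2 < α) (hx : 0 < x)
    (hθ : θ ∈ Ioo (-(π / (2 * α))) 0) :
    Tendsto (fun l : ℝ => (l : ℂ) * stableFourierIntegrand α γ x (l * exp (θ * I))) atTop
      (𝓝 0) := by
  have hθ' := mem_Ioo_of_mem_sector hα (Ioo_subset_Icc_self hθ)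
  have hsin : Real.sin θ < 0 := Real.sin_neg_of_neg_of_neg_pi_lt hθ.2 hθ'.1
  have hcos := cos_mul_nonneg_of_mem_Icc (by linarith) (Ioo_subset_Icc_self hθ)
  refine squeeze_zero_norm' ?_ (tendsto_rpow_mul_exp_neg_mul_atTop_nhds_zero (γ + 1) _
    (mul_pos hx (neg_pos.2 hsin)))
  filter_upwards [eventually_gt_atTop 0] with l hl
  rw [norm_mul, norm_real, Real.norm_of_nonneg hl.le,
    norm_stableFourierIntegrand_ray hl (Ioo_subset_Ioc_self hθ'), Real.rpow_add_one hl.ne']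
  calc l * (l ^ γ * Real.exp (l * x * Real.sin θ - l ^ α * Real.cos (α * θ)))
      ≤ l * (l ^ γ * Real.exp (-(x * -Real.sin θ) * l)) := by
        gcongr
        nlinarith [mul_nonneg (Real.rpow_nonneg hl.le α) hcos]
    _ = l ^ γ * l * Real.exp (-(x * -Real.sin θ) * l) := by ring

theorem exists_sector_decay_const (hα : 1 ≤ α) (hx : 0 < x) :
    ∃ c, 0 < c ∧ c ≤ x * Real.sin (π / (4 * α)) ∧ c ≤ Real.cos (π / 4) := by
  have hπ := Real.pi_pos
  refine ⟨min (x * Real.sin (π / (4 * α))) (Real.cos (π / 4)), lt_min ?_ ?_,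
    min_le_left _ _, min_le_right _ _⟩
  · exact mul_pos hx
      (Real.sin_pos_of_pos_of_lt_pi (by positivity) (div_lt_self hπ (by linarith)))
  · exact Real.cos_pos_of_mem_Ioo ⟨by linarith, by linarith⟩

theorem integrableOn_rayIntegrand_stableFourierIntegrand (hα : 1 ≤ α) (hγ : -1 < γ)
    (hx : 0 < x) (hθ : θ ∈ Icc (-(π / (2 * α))) 0) :
    IntegrableOn (rayIntegrand (stableFourierIntegrand α γ x) θ) (Ioi 0) := by
  obtain ⟨c, hc, hc₁, hc₂⟩ := exists_sector_decay_const hα hx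
  exact integrableOn_rayIntegrand
    (fun l hl => (hasDerivAt_stableFourierIntegrand (ofReal_mul_exp_mul_I_mem_slitPlane hl
      (mem_Ioo_of_mem_sector (by linarith) hθ))).differentiableAt)
    (integrableOn_sectorMajorant hγ hc (by linarith))
    (fun l hl => norm_stableFourierIntegrand_le hα hx.le hc₁ hc₂ hθ hl)

theorem integral_rayIntegrand_stableFourierIntegrand_eq (hα : 1 ≤ α) (hγ : 0 < γ)
    (hx : 0 < x) :
    ∫ l in Ioi 0, rayIntegrand (stableFourierIntegrand α γ x) (-(π / (2 * α))) l
      = ∫ l in Ioi 0, rayIntegrand (stableFourierIntegrand α γ x) 0 l := by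
  have hα0 : 0 < α := by linarith
  obtain ⟨c, hc, hc₁, hc₂⟩ := exists_sector_decay_const hα hx
  have hM : ∀ {s}, -1 < s → IntegrableOn (sectorMajorant c α s) (Ioi 0) := fun hs =>
    integrableOn_sectorMajorant hs hc hα0
  exact integral_rayIntegrand_eq (neg_nonpos.2 (by positivity))
    (fun φ hφ l hl => (hasDerivAt_stableFourierIntegrand (ofReal_mul_exp_mul_I_mem_slitPlane hl
      (mem_Ioo_of_mem_sector (by linarith) hφ))).differentiableAt)
    (continuousAt_stableFourierIntegrand_zero hα0 hγ)
    (hM (by linarith))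
    (fun φ hφ l hl => norm_stableFourierIntegrand_le hα hx.le hc₁ hc₂ hφ hl)
    ((((hM (by linarith)).const_mul γ).add ((hM (by linarith)).const_mul x)).add
      ((hM (by linarith)).const_mul α))
    (fun φ hφ l hl => mul_norm_deriv_stableFourierIntegrand_le hα hγ.le hx.le hc₁ hc₂ hφ hl)
    (fun φ hφ => tendsto_ofReal_mul_stableFourierIntegrand_ray (by linarith) hx hφ)

theorem rayIntegrand_stableFourierIntegrand_neg_pi_div (hα : 1 / 2 < α) (hl : 0 < l) :
    rayIntegrand (stableFourierIntegrand α γ x) (-(π / (2 * α))) l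
      = exp (-(I * (((γ + 1) * π / (2 * α) : ℝ) : ℂ))) *
        ((l : ℂ) ^ (γ : ℂ) *
          exp (-((l : ℂ) * x) * exp (I * (((α - 1) * π / (2 * α) : ℝ) : ℂ))
            - (l : ℂ) ^ (α : ℂ) * exp (-(I * ((π / 2 : ℝ) : ℂ))))) := by
  set b := π / (2 * α) with hb
  have hθ : -b ∈ Ioc (-π) π := Ioo_subset_Ioc_self (mem_Ioo_of_mem_sector hα
    ⟨le_rfl, neg_nonpos.2 (div_nonneg Real.pi_pos.le (by linarith))⟩)
  have hrot : exp (I * (((α - 1) * π / (2 * α) : ℝ) : ℂ)) = I * exp ((-b : ℝ) * I) := by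
    rw [show (α - 1) * π / (2 * α) = π / 2 + -b by rw [hb]; field_simp; ring, ofReal_add,
      mul_add, exp_add, mul_comm I (((π / 2 : ℝ)) : ℂ), ofReal_div, ofReal_ofNat,
      exp_pi_div_two_mul_I, mul_comm I ((-b : ℝ) : ℂ)]
  have hquarter : exp ((-b : ℝ) * α * I) = exp (-(I * ((π / 2 : ℝ) : ℂ))) := by
    have hα0 : (α : ℂ) ≠ 0 := ofReal_ne_zero.2 (by linarith)
    congr 1
    rw [hb]
    push_cast
    field_simp
  have hphase : exp (-(I * (((γ + 1) * π / (2 * α) : ℝ) : ℂ)))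
      = exp ((-b : ℝ) * I) * exp ((-b : ℝ) * γ * I) := by
    rw [← exp_add, hb]
    congr 1
    push_cast
    ring
  rw [rayIntegrand, stableFourierIntegrand, ofReal_mul_exp_mul_I_cpow hl hθ,
    ofReal_mul_exp_mul_I_cpow hl hθ, hrot, hquarter, hphase]
  ring_nf

end Rotation

end

theorem contour_rotation_identity_general (α γ x : ℝ) (hα : 1 < α)
    (hγ : 0 < γ) (hx : 0 < x) :
    IntegrableOn
      (fun ξ : ℝ => (ξ : ℂ) ^ (γ : ℂ) *
        Complex.exp (-(Complex.I * (ξ : ℂ) * (x : ℂ)) - (ξ : ℂ) ^ (α : ℂ)))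
      (Set.Ioi 0) ∧
    IntegrableOn
      (fun l : ℝ => (l : ℂ) ^ (γ : ℂ) *
        Complex.exp (-((l : ℂ) * (x : ℂ)) *
            Complex.exp (Complex.I * (((α - 1) * Real.pi / (2 * α) : ℝ) : ℂ))
          - (l : ℂ) ^ (α : ℂ) * Complex.exp (-(Complex.I * ((Real.pi / 2 : ℝ) : ℂ)))))
      (Set.Ioi 0) ∧
    (∫ ξ in Set.Ioi (0 : ℝ), (ξ : ℂ) ^ (γ : ℂ) *
        Complex.exp (-(Complex.I * (ξ : ℂ) * (x : ℂ)) - (ξ : ℂ) ^ (α : ℂ)))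
      = Complex.exp (-(Complex.I * (((γ + 1) * Real.pi / (2 * α) : ℝ) : ℂ))) *
        ∫ l in Set.Ioi (0 : ℝ), (l : ℂ) ^ (γ : ℂ) *
          Complex.exp (-((l : ℂ) * (x : ℂ)) *
              Complex.exp (Complex.I * (((α - 1) * Real.pi / (2 * α) : ℝ) : ℂ))
            - (l : ℂ) ^ (α : ℂ) * Complex.exp (-(Complex.I * ((Real.pi / 2 : ℝ) : ℂ)))) := by
  have hb : 0 ≤ π / (2 * α) := by positivity
  have hint := fun {θ : ℝ} (hθ : θ ∈ Icc (-(π / (2 * α))) 0) =>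
    integrableOn_rayIntegrand_stableFourierIntegrand (γ := γ) hα.le (by linarith) hx hθ
  have hrot := fun (l : ℝ) (hl : l ∈ Ioi 0) =>
    rayIntegrand_stableFourierIntegrand_neg_pi_div (α := α) (γ := γ) (x := x) (by linarith) hl
  refine ⟨?_, ?_, ?_⟩
  · exact (hint ⟨neg_nonpos.2 hb, le_rfl⟩).congr_fun (fun l _ => rayIntegrand_zero _ l)
      measurableSet_Ioi
  · refine IntegrableOn.congr_fun ((hint ⟨le_rfl, neg_nonpos.2 hb⟩).const_mul
      (exp (I * (((γ + 1) * π / (2 * α) : ℝ) : ℂ)))) (fun l hl => ?_) measurableSet_Ioi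
    rw [hrot l hl, ← mul_assoc, ← exp_add, add_neg_cancel, exp_zero, one_mul]
  · have h := integral_rayIntegrand_stableFourierIntegrand_eq hα.le hγ hx
    rw [setIntegral_congr_fun measurableSet_Ioi hrot, integral_const_mul] at h
    simp only [rayIntegrand_zero] at h
    exact h.symm

/-- Contour rotation identity (Cauchy's theorem applied to
`z ↦ z^γ exp(−izx − z^α)` on a circular sector of opening angle `π/(2α)`):
for `α ∈ (1,2]`, `γ > 0` and `x > 0`,
`∫₀^∞ ξ^γ exp(−iξx − ξ^α) dξ
  = e^{−i(γ+1)π/(2α)} ∫₀^∞ λ^γ exp(−λx·e^{i(α−1)π/(2α)} − λ^α·e^{−iπ/2}) dλ`,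
and both improper complex integrals converge absolutely. -/
theorem contour_rotation_identity (α γ x : ℝ) (hα : 1 < α) (hα' : α ≤ 2)
    (hγ : 0 < γ) (hx : 0 < x) :
    IntegrableOn
      (fun ξ : ℝ => (ξ : ℂ) ^ (γ : ℂ) *
        Complex.exp (-(Complex.I * (ξ : ℂ) * (x : ℂ)) - (ξ : ℂ) ^ (α : ℂ)))
      (Set.Ioi 0) ∧
    IntegrableOn
      (fun l : ℝ => (l : ℂ) ^ (γ : ℂ) *
        Complex.exp (-((l : ℂ) * (x : ℂ)) *
            Complex.exp (Complex.I * (((α - 1) * Real.pi / (2 * α) : ℝ) : ℂ))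
          - (l : ℂ) ^ (α : ℂ) * Complex.exp (-(Complex.I * ((Real.pi / 2 : ℝ) : ℂ)))))
      (Set.Ioi 0) ∧
    (∫ ξ in Set.Ioi (0 : ℝ), (ξ : ℂ) ^ (γ : ℂ) *
        Complex.exp (-(Complex.I * (ξ : ℂ) * (x : ℂ)) - (ξ : ℂ) ^ (α : ℂ)))
      = Complex.exp (-(Complex.I * (((γ + 1) * Real.pi / (2 * α) : ℝ) : ℂ))) *
        ∫ l in Set.Ioi (0 : ℝ), (l : ℂ) ^ (γ : ℂ) *
          Complex.exp (-((l : ℂ) * (x : ℂ)) *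
              Complex.exp (Complex.I * (((α - 1) * Real.pi / (2 * α) : ℝ) : ℂ))
            - (l : ℂ) ^ (α : ℂ) * Complex.exp (-(Complex.I * ((Real.pi / 2 : ℝ) : ℂ)))) :=
  contour_rotation_identity_general α γ x hα hγ hx
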